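/- Let 0 < μ ≤ L, Q := L/μ ≥ 1, σ ∈ [0, 1), integer n ≥ 1, and 0 < α ≤ (1−σ²)²/(187QL). Then I₃ − J_α is invertible and ‖(I₃ − J_α)^{−1} H_α‖_∞^q ≤ 0.66, where q := (1, 1, 1453/(1−σ²)²). -/

import Mathlib

/-- The system matrix `J_α` governing GT-SVRG. -/
noncomputable def GTSVRGMatrixJ (μ L σ α : ℝ) : Matrix (Fin 3) (Fin 3) ℝ :=
  !![(1 + σ ^ 2) / 2, 0, 2 * α ^ 2 * L ^ 2 / (1 - σ ^ 2);
     2 * L ^ 2 * α / μ, 1 - μ * α / 2, 0;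
     120 / (1 - σ ^ 2), 87 / (1 - σ ^ 2), (3 + σ ^ 2) / 4]

/-- The input matrix `H_α` governing GT-SVRG. -/
noncomputable def GTSVRGMatrixH (L σ α : ℝ) (n : ℕ) : Matrix (Fin 3) (Fin 3) ℝ :=
  !![0, 0, 0;
     4 * L ^ 2 * α ^ 2 / n, 4 * L ^ 2 * α ^ 2 / n, 0;
     38 / (1 - σ ^ 2), 38 / (1 - σ ^ 2), 0]

/-- The weighted infinity matrix norm `‖A‖_∞^w = max_i (∑_j |A i j| * w j) / w i`
induced by a positive weight vector `w`. -/
noncomputable def wInfMatNorm {d : ℕ} (w : Fin d → ℝ) (A : Matrix (Fin d) (Fin d) ℝ) : ℝ :=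
  ⨆ i, (∑ j, |A i j| * w j) / w i

/-!
`H_α = u (1, 1, 0)ᵀ` with `u = (0, 4L²α²/n, 38/(1-σ²))`, so `(I - J_α)⁻¹ H_α = v (1, 1, 0)ᵀ`
where `(I - J_α) v = u`, and row `i` of the weighted norm is `2 |v i| / q i`.

The system is solved by back substitution. In the scaled variables `x = αL²/(μ(1-σ²)²) ≤ 1/187`,
`z = αL/(1-σ²)² ≤ x` and `t = (1-σ²)²/n ≤ 1` the solution is
`v = (4z²W, 8tx + 16x²W, W/(1-σ²)²)`, where `W = 4(38 + 696tx) + (1920z² + 5568x²)W`.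
The coefficient `1920z² + 5568x²` is at most `7488/34969`, so `W ≤ 213` and all three rows are
bounded with room to spare; the same coefficient gives
`det (I - J_α) = μα(1-σ²)²/16 · (1 - 1920z² - 5568x²) > 0`.
-/

open Matrix

section WeightedNorm

variable {d : ℕ} {w : Fin d → ℝ} {c : ℝ}

lemma wInfMatNorm_le {A : Matrix (Fin d) (Fin d) ℝ} (hw : ∀ i, 0 < w i) (hc : 0 ≤ c)
    (h : ∀ i, ∑ j, |A i j| * w j ≤ c * w i) : wInfMatNorm w A ≤ c :=
  Real.iSup_le (fun i => (div_le_iff₀ (hw i)).2 (h i)) hc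

lemma wInfMatNorm_vecMulVec_le {u r : Fin d → ℝ} (hw : ∀ i, 0 < w i) (hc : 0 ≤ c)
    (h : ∀ i, |u i| * ∑ j, |r j| * w j ≤ c * w i) : wInfMatNorm w (vecMulVec u r) ≤ c :=
  wInfMatNorm_le hw hc fun i => by
    simpa only [vecMulVec_apply, abs_mul, mul_assoc, Finset.mul_sum] using h i

end WeightedNorm

lemma Matrix.inv_mul_vecMulVec_of_mulVec_eq {m n α : Type*} [Fintype n] [DecidableEq n]
    [CommRing α] {A : Matrix n n α} (hA : IsUnit A) {u v : n → α} (r : m → α)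
    (h : A *ᵥ v = u) : A⁻¹ * vecMulVec u r = vecMulVec v r := by
  rw [mul_vecMulVec, ← h, mulVec_mulVec, nonsing_inv_mul _ ((isUnit_iff_isUnit_det A).1 hA),
    one_mulVec]

lemma GTSVRGMatrixH_eq_vecMulVec (L σ α : ℝ) (n : ℕ) :
    GTSVRGMatrixH L σ α n =
      vecMulVec ![0, 4 * L ^ 2 * α ^ 2 / n, 38 / (1 - σ ^ 2)] ![1, 1, 0] := by
  ext i j
  fin_cases i <;> fin_cases j <;> simp [GTSVRGMatrixH, vecMulVec_apply]

section ScaledVariables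

variable {μ L σ α x z : ℝ}

lemma det_one_sub_GTSVRGMatrixJ (hμ : μ ≠ 0) (hs : 1 - σ ^ 2 ≠ 0)
    (hx : x = α * L ^ 2 / (μ * (1 - σ ^ 2) ^ 2)) (hz : z = α * L / (1 - σ ^ 2) ^ 2) :
    (1 - GTSVRGMatrixJ μ L σ α).det =
      μ * α * (1 - σ ^ 2) ^ 2 / 16 * (1 - (1920 * z ^ 2 + 5568 * x ^ 2)) := by
  subst hx hz
  simp only [det_fin_three, GTSVRGMatrixJ, Matrix.sub_apply, one_apply, of_apply, cons_val',
    cons_val, cons_val_zero, cons_val_one, cons_val_fin_one, Fin.reduceEq, ↓reduceIte]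
  field_simp
  ring

lemma one_sub_GTSVRGMatrixJ_mulVec {t W : ℝ} {n : ℕ} (hμ : μ ≠ 0) (hs : 1 - σ ^ 2 ≠ 0)
    (hx : x = α * L ^ 2 / (μ * (1 - σ ^ 2) ^ 2)) (hz : z = α * L / (1 - σ ^ 2) ^ 2)
    (ht : t = (1 - σ ^ 2) ^ 2 / n)
    (hW : W = 4 * (38 + 696 * t * x) + (1920 * z ^ 2 + 5568 * x ^ 2) * W) :
    (1 - GTSVRGMatrixJ μ L σ α) *ᵥ
        ![4 * z ^ 2 * W, 8 * t * x + 16 * x ^ 2 * W, W / (1 - σ ^ 2) ^ 2] =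
      ![0, 4 * L ^ 2 * α ^ 2 / n, 38 / (1 - σ ^ 2)] := by
  subst hx hz ht
  ext i
  fin_cases i <;> simp only [mulVec, dotProduct, Fin.sum_univ_three, GTSVRGMatrixJ,
    Matrix.sub_apply, one_apply, of_apply, cons_val', cons_val, cons_val_zero, cons_val_one,
    cons_val_fin_one, Fin.zero_eta, Fin.mk_one, Fin.reduceFinMk, Fin.reduceEq, ↓reduceIte]
  · field_simp
    ring
  · field_simp
    ring
  · field_simp at hW ⊢
    linear_combination hW

end ScaledVariables

section ScaledBounds

variable {x z t : ℝ}

lemma scaled_stepsize_bounds {μ L σ α Q : ℝ} (hμ : 0 < μ) (hμL : μ ≤ L) (hQ : Q = L / μ)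
    (hs : 0 < 1 - σ ^ 2) (hα0 : 0 ≤ α) (hα : α ≤ (1 - σ ^ 2) ^ 2 / (187 * Q * L))
    (hx : x = α * L ^ 2 / (μ * (1 - σ ^ 2) ^ 2)) (hz : z = α * L / (1 - σ ^ 2) ^ 2) :
    0 ≤ z ∧ z ≤ x ∧ x ≤ 1 / 187 := by
  have hL : 0 < L := hμ.trans_le hμL
  have hz0 : 0 ≤ z := hz ▸ by positivity
  have hxz : x = z * (L / μ) := by
    rw [hx, hz]
    field_simp
  refine ⟨hz0, hxz ▸ le_mul_of_one_le_right hz0 ((one_le_div hμ).2 hμL), ?_⟩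
  rw [hQ, le_div_iff₀ (by positivity),
    show α * (187 * (L / μ) * L) = 187 * (α * L ^ 2) / μ by ring, div_le_iff₀ hμ] at hα
  rw [hx, div_le_iff₀ (by positivity)]
  linarith

lemma scaled_contraction_le (hz : 0 ≤ z) (hzx : z ≤ x) (hx : x ≤ 1 / 187) :
    1920 * z ^ 2 + 5568 * x ^ 2 ≤ 7488 / 34969 := by
  have hz2 : z ^ 2 ≤ (1 / 187) ^ 2 := pow_le_pow_left₀ hz (hzx.trans hx) 2
  have hx2 : x ^ 2 ≤ (1 / 187) ^ 2 := pow_le_pow_left₀ (hz.trans hzx) hx 2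
  linarith

lemma exists_scaled_fixedPoint (hz : 0 ≤ z) (hzx : z ≤ x) (hx : x ≤ 1 / 187) (ht0 : 0 ≤ t)
    (ht : t ≤ 1) :
    ∃ W, W = 4 * (38 + 696 * t * x) + (1920 * z ^ 2 + 5568 * x ^ 2) * W ∧ 0 ≤ W ∧ W ≤ 213 := by
  have hk := scaled_contraction_le hz hzx hx
  have hgap : 0 < 1 - (1920 * z ^ 2 + 5568 * x ^ 2) := by linarith
  have htx : 0 ≤ t * x := mul_nonneg ht0 (hz.trans hzx)
  have htx' : t * x ≤ 1 / 187 := by nlinarith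
  refine ⟨4 * (38 + 696 * t * x) / (1 - (1920 * z ^ 2 + 5568 * x ^ 2)), ?_,
    div_nonneg (by linarith) hgap.le, ?_⟩
  · generalize 1920 * z ^ 2 + 5568 * x ^ 2 = k at hgap ⊢
    field_simp
    ring
  · rw [div_le_iff₀ hgap]
    nlinarith

lemma scaled_solution_row_bound {s W : ℝ} (hz : 0 ≤ z) (hzx : z ≤ x) (hx : x ≤ 1 / 187)
    (ht0 : 0 ≤ t) (ht : t ≤ 1) (hW0 : 0 ≤ W) (hW : W ≤ 213) (i : Fin 3) :
    |![4 * z ^ 2 * W, 8 * t * x + 16 * x ^ 2 * W, W / s ^ 2] i| *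
        ∑ j, |![(1 : ℝ), 1, 0] j| * ![1, 1, 1453 / s ^ 2] j ≤
      0.66 * ![1, 1, 1453 / s ^ 2] i := by
  have hx0 : 0 ≤ x := hz.trans hzx
  have hsum : ∑ j, |![(1 : ℝ), 1, 0] j| * ![1, 1, 1453 / s ^ 2] j = 2 := by
    simp [Fin.sum_univ_three, one_add_one_eq_two]
  rw [hsum]
  fin_cases i <;> simp only [Fin.zero_eta, Fin.mk_one, Fin.reduceFinMk, cons_val]
  · rw [abs_of_nonneg (by positivity)]
    nlinarith
  · rw [abs_of_nonneg (by positivity)]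
    nlinarith
  · rw [abs_of_nonneg (by positivity), div_mul_eq_mul_div, ← mul_div_assoc]
    exact div_le_div_of_nonneg_right (by linarith) (by positivity)

end ScaledBounds

theorem gtsvrg_JH_norm_bound_general (μ L σ α Q : ℝ) (n : ℕ)
    (hμ : 0 < μ) (hμL : μ ≤ L) (hQ : Q = L / μ)
    (hσ0 : 0 ≤ σ) (hσ1 : σ < 1) (hn : 1 ≤ n)
    (hα0 : 0 < α) (hα : α ≤ (1 - σ ^ 2) ^ 2 / (187 * Q * L)) :
    IsUnit (1 - GTSVRGMatrixJ μ L σ α) ∧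
      wInfMatNorm ![1, 1, 1453 / (1 - σ ^ 2) ^ 2]
          ((1 - GTSVRGMatrixJ μ L σ α)⁻¹ * GTSVRGMatrixH L σ α n) ≤ 0.66 := by
  have hs : 0 < 1 - σ ^ 2 := by nlinarith
  obtain ⟨x, hx⟩ : ∃ x, x = α * L ^ 2 / (μ * (1 - σ ^ 2) ^ 2) := ⟨_, rfl⟩
  obtain ⟨z, hz⟩ : ∃ z, z = α * L / (1 - σ ^ 2) ^ 2 := ⟨_, rfl⟩
  obtain ⟨t, ht⟩ : ∃ t, t = (1 - σ ^ 2) ^ 2 / n := ⟨_, rfl⟩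
  obtain ⟨hz0, hzx, hx187⟩ := scaled_stepsize_bounds hμ hμL hQ hs hα0.le hα hx hz
  have ht0 : 0 ≤ t := ht ▸ by positivity
  have ht1 : t ≤ 1 := by
    have hn' : (1 : ℝ) ≤ n := by exact_mod_cast hn
    rw [ht, div_le_one (by positivity)]
    nlinarith
  obtain ⟨W, hW, hW0, hW213⟩ := exists_scaled_fixedPoint hz0 hzx hx187 ht0 ht1
  have hunit : IsUnit (1 - GTSVRGMatrixJ μ L σ α) := by
    have hgap : 0 < 1 - (1920 * z ^ 2 + 5568 * x ^ 2) := by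
      linarith [scaled_contraction_le hz0 hzx hx187]
    rw [isUnit_iff_isUnit_det, det_one_sub_GTSVRGMatrixJ hμ.ne' hs.ne' hx hz, isUnit_iff_ne_zero]
    positivity
  refine ⟨hunit, ?_⟩
  rw [GTSVRGMatrixH_eq_vecMulVec, Matrix.inv_mul_vecMulVec_of_mulVec_eq hunit _
    (one_sub_GTSVRGMatrixJ_mulVec hμ.ne' hs.ne' hx hz ht hW)]
  refine wInfMatNorm_vecMulVec_le (fun i => ?_) (by norm_num)
    (scaled_solution_row_bound hz0 hzx hx187 ht0 ht1 hW0 hW213)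
  fin_cases i <;> simp only [Fin.zero_eta, Fin.mk_one, Fin.reduceFinMk, cons_val] <;> positivity

/-- For `0 < α ≤ (1−σ²)²/(187QL)`, the matrix `I₃ − J_α` is
invertible and `‖(I₃ − J_α)⁻¹ H_α‖_∞^q ≤ 0.66` with `q = (1, 1, 1453/(1−σ²)²)`. -/
theorem gtsvrg_JH_norm_bound (μ L σ α Q : ℝ) (n : ℕ)
    (hμ : 0 < μ) (hμL : μ ≤ L) (hQ : Q = L / μ) (hQ1 : 1 ≤ Q)
    (hσ0 : 0 ≤ σ) (hσ1 : σ < 1) (hn : 1 ≤ n)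
    (hα0 : 0 < α) (hα : α ≤ (1 - σ ^ 2) ^ 2 / (187 * Q * L)) :
    IsUnit (1 - GTSVRGMatrixJ μ L σ α) ∧
      wInfMatNorm ![1, 1, 1453 / (1 - σ ^ 2) ^ 2]
          ((1 - GTSVRGMatrixJ μ L σ α)⁻¹ * GTSVRGMatrixH L σ α n) ≤ 0.66 :=
  gtsvrg_JH_norm_bound_general μ L σ α Q n hμ hμL hQ hσ0 hσ1 hn hα0 hα
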